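/- arXiv:1508.04404 — 2 statements merged into one kernel-verified Lean document; each statement's English description precedes it below -/
import Mathlib

section
/- Let G be a group and N a perfect normal subgroup of G (i.e. N = [N,N]) which has a complement in G. Then the sequence J̃(N) → J̃(G) → J̃(G/N) → 1 is exact, where the first map is induced by the inclusion N → G and the second by the quotient map G → G/N; that is, the second map is surjective and its kernel equals the image of the first map. (Topologically this is the exact sequence π₂ˢ(K(N,1)) → π₂ˢ(K(G,1)) → π₂ˢ(K(G/N,1)) → 0.) -/
/- Nonabelian tensor square framework (Brown–Loday). -/

namespace NATensor

variable (G : Type*) [Group G]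

/-- The relator set for the nonabelian tensor square of `G`:
`g g' ⊗ h = (ᵍg' ⊗ ᵍh)(g ⊗ h)` and `g ⊗ h h' = (g ⊗ h)(ʰg ⊗ ʰh')`. -/
def rels : Set (FreeGroup (G × G)) :=
  {r | (∃ g g' h : G,
          r = FreeGroup.of (g * g', h) *
              (FreeGroup.of (g * g' * g⁻¹, g * h * g⁻¹) * FreeGroup.of (g, h))⁻¹) ∨
       (∃ g h h' : G,
          r = FreeGroup.of (g, h * h') *
              (FreeGroup.of (g, h) * FreeGroup.of (h * g * h⁻¹, h * h' * h⁻¹))⁻¹)}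

/-- The nonabelian tensor square `G ⊗ G`. -/
abbrev TS := PresentedGroup (rels G)

variable {G}

/-- The generator `g ⊗ h` of the nonabelian tensor square. -/
def tmul (g h : G) : TS G := PresentedGroup.of (g, h)

lemma mk_rel_eq_one {r : FreeGroup (G × G)} (hr : r ∈ rels G) :
    (PresentedGroup.mk (rels G) r : TS G) = 1 :=
  (QuotientGroup.eq_one_iff r).mpr (Subgroup.subset_normalClosure hr)

lemma tmul_rel₁ (g g' h : G) :
    tmul (g * g') h = tmul (g * g' * g⁻¹) (g * h * g⁻¹) * tmul g h := by
  have h1 := mk_rel_eq_one (G := G) (Or.inl ⟨g, g', h, rfl⟩)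
  simp only [map_mul, map_inv, mul_inv_eq_one] at h1
  exact h1

lemma tmul_rel₂ (g h h' : G) :
    tmul g (h * h') = tmul g h * tmul (h * g * h⁻¹) (h * h' * h⁻¹) := by
  have h1 := mk_rel_eq_one (G := G) (Or.inr ⟨g, h, h', rfl⟩)
  simp only [map_mul, map_inv, mul_inv_eq_one] at h1
  exact h1

variable (G)

/-- The homomorphism `κ : G ⊗ G → G`, `g ⊗ h ↦ [g,h] = g h g⁻¹ h⁻¹` (its image is `[G,G]`). -/
def kappa : TS G →* G :=
  PresentedGroup.toGroup (f := fun x : G × G => x.1 * x.2 * x.1⁻¹ * x.2⁻¹) (by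
    rintro r (⟨g, g', h, rfl⟩ | ⟨g, h, h', rfl⟩) <;>
      simp only [map_mul, map_inv, FreeGroup.lift_apply_of] <;> group)

variable {G}

@[simp] lemma kappa_tmul (g h : G) : kappa G (tmul g h) = g * h * g⁻¹ * h⁻¹ :=
  PresentedGroup.toGroup.of _

variable (G)

/-- `J(G) = ker κ ≅ π₃(SK(G,1))`. -/
def J : Subgroup (TS G) := (kappa G).ker

/-- `∇(G)`: the (normal) subgroup of `G ⊗ G` generated by the elements `x ⊗ x`. -/
def nabla : Subgroup (TS G) :=
  Subgroup.normalClosure {t | ∃ x : G, t = tmul x x}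

/-- `Δ(G)`: the (normal) subgroup of `G ⊗ G` generated by the `(x ⊗ y)(y ⊗ x)`. -/
def delta : Subgroup (TS G) :=
  Subgroup.normalClosure {t | ∃ x y : G, t = tmul x y * tmul y x}

instance : (nabla G).Normal := Subgroup.normalClosure_normal

instance : (delta G).Normal := Subgroup.normalClosure_normal

/-- The exterior square `G ∧ G = (G ⊗ G)/∇(G)`. -/
abbrev ES := TS G ⧸ nabla G

/-- The symmetric square `G ⊗̃ G = (G ⊗ G)/Δ(G)`. -/
abbrev SS := TS G ⧸ delta G

variable {G}

/-- The element `g ∧ h` of the exterior square. -/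
def emul (g h : G) : ES G := QuotientGroup.mk' (nabla G) (tmul g h)

/-- The image of `g ⊗ h` in the symmetric square. -/
def smul (g h : G) : SS G := QuotientGroup.mk' (delta G) (tmul g h)

variable {H : Type*} [Group H]

/-- The induced homomorphism `G ⊗ G → H ⊗ H` of a homomorphism `f : G → H`. -/
def tmap (f : G →* H) : TS G →* TS H :=
  PresentedGroup.toGroup (f := fun x : G × G => tmul (f x.1) (f x.2)) (by
    rintro r (⟨g, g', h, rfl⟩ | ⟨g, h, h', rfl⟩) <;>
      simp only [map_mul, map_inv, FreeGroup.lift_apply_of, mul_inv_eq_one]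
    · rw [tmul_rel₁]
    · rw [tmul_rel₂])

@[simp] lemma tmap_tmul (f : G →* H) (g h : G) :
    tmap f (tmul g h) = tmul (f g) (f h) :=
  PresentedGroup.toGroup.of _

lemma nabla_le_comap_nabla (f : G →* H) :
    nabla G ≤ MonoidHom.ker ((QuotientGroup.mk' (nabla H)).comp (tmap f)) := by
  refine Subgroup.normalClosure_le_normal ?_
  rintro _ ⟨y, rfl⟩
  simp only [SetLike.mem_coe, MonoidHom.mem_ker, MonoidHom.comp_apply, tmap_tmul,
    QuotientGroup.mk'_apply, QuotientGroup.eq_one_iff]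
  exact Subgroup.subset_normalClosure ⟨f y, rfl⟩

lemma delta_le_comap_delta (f : G →* H) :
    delta G ≤ MonoidHom.ker ((QuotientGroup.mk' (delta H)).comp (tmap f)) := by
  refine Subgroup.normalClosure_le_normal ?_
  rintro _ ⟨x, y, rfl⟩
  simp only [SetLike.mem_coe, MonoidHom.mem_ker, MonoidHom.comp_apply, map_mul, tmap_tmul,
    QuotientGroup.mk'_apply, ← QuotientGroup.mk_mul, QuotientGroup.eq_one_iff]
  exact Subgroup.subset_normalClosure ⟨f x, f y, rfl⟩

/-- The induced homomorphism `G ∧ G → H ∧ H` of a homomorphism `f : G → H`. -/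
def emap (f : G →* H) : ES G →* ES H :=
  QuotientGroup.lift (nabla G) ((QuotientGroup.mk' (nabla H)).comp (tmap f))
    (fun x hx => MonoidHom.mem_ker.mp (nabla_le_comap_nabla f hx))

@[simp] lemma emap_emul (f : G →* H) (g h : G) :
    emap f (emul g h) = emul (f g) (f h) := by
  simp [emap, emul, QuotientGroup.mk'_apply, QuotientGroup.lift_mk']
  rfl

/-- The induced homomorphism `G ⊗̃ G → H ⊗̃ H` of a homomorphism `f : G → H`. -/
def smap (f : G →* H) : SS G →* SS H :=
  QuotientGroup.lift (delta G) ((QuotientGroup.mk' (delta H)).comp (tmap f))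
    (fun x hx => MonoidHom.mem_ker.mp (delta_le_comap_delta f hx))

variable (G)

lemma nabla_le_ker_kappa : nabla G ≤ (kappa G).ker := by
  refine Subgroup.normalClosure_le_normal ?_
  rintro _ ⟨x, rfl⟩
  simp only [SetLike.mem_coe, MonoidHom.mem_ker, kappa_tmul]
  group

/-- The homomorphism `κ' : G ∧ G → G`, `g ∧ h ↦ [g,h]` (its image is `[G,G]`). -/
def kappa' : ES G →* G :=
  QuotientGroup.lift (nabla G) (kappa G)
    (fun x hx => MonoidHom.mem_ker.mp (nabla_le_ker_kappa G hx))

/-- The Schur multiplier `M(G) = ker κ' ≅ H₂(G)`. -/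
def M : Subgroup (ES G) := (kappa' G).ker

/-- `J̃(G) = J(G)/Δ(G) ≅ π₂ˢ(K(G,1))`, realized as the image of `J(G)` in `G ⊗̃ G`. -/
def Jt : Subgroup (SS G) := Subgroup.map (QuotientGroup.mk' (delta G)) (J G)

/-- `∇(G)/Δ(G)`, realized as the image of `∇(G)` in `G ⊗̃ G`. -/
def nablaBar : Subgroup (SS G) := Subgroup.map (QuotientGroup.mk' (delta G)) (nabla G)

end NATensor

/-!
A complement `B` of `N` gives a section `σ` of `π : G → G ⧸ N`, so `tmap π` is split by
`tmap σ`. This gives surjectivity, and lets one move any class in the kernel to a representative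
`y ∈ J(G)` with `tmap π y = 1`. The kernel of a split `tmap π` is normally generated by the
`a ⊗ g` and `g ⊗ a` with `a ∈ N`. Modulo `Δ(G)` and the image of `N ⊗ N` (normal, because `G ⊗ G`
acts on itself through `κ`), `g ⊗ a` is the inverse of `a ⊗ g`, and `a ↦ a ⊗ g` is a
homomorphism on `N` sending commutators to central elements, hence trivial since `N` is perfect.
So `y` comes from `N ⊗ N` modulo `Δ(G)`, and injectivity of `N → G` puts its preimage in `J(N)`.
-/

open scoped commutatorElement

theorem Subgroup.eq_top_of_commutatorSet_subset {P : Type*} [Group P]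
    (hP : _root_.commutator P = ⊤) {S : Subgroup P} (hS : commutatorSet P ⊆ S) : S = ⊤ :=
  top_le_iff.mp (hP ▸ commutator_eq_closure P ▸ (Subgroup.closure_le S).mpr hS)

theorem MonoidHom.eq_one_of_commutator_eq_top {P Q : Type*} [Group P] [Group Q]
    (hP : commutator P = ⊤) (q : P →* Q) (hq : ∀ u m v : P, Commute (q ⁅u, m⁆) (q v)) :
    q = 1 := by
  have hcentral : (Subgroup.centralizer (Set.range q)).comap q = ⊤ := by
    refine Subgroup.eq_top_of_commutatorSet_subset hP ?_
    rintro _ ⟨u, m, rfl⟩ _ ⟨v, rfl⟩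
    exact (hq u m v).symm.eq
  have hker : q.ker = ⊤ := by
    refine Subgroup.eq_top_of_commutatorSet_subset hP ?_
    rintro _ ⟨x, y, rfl⟩
    have hx : x ∈ (Subgroup.centralizer (Set.range q)).comap q := hcentral ▸ Subgroup.mem_top x
    rw [SetLike.mem_coe, MonoidHom.mem_ker, map_commutatorElement,
      commutatorElement_eq_one_iff_commute]
    exact (hx (q y) ⟨y, rfl⟩).symm
  exact MonoidHom.ker_eq_top_iff.mp hker

namespace NATensor

variable {G H K : Type*} [Group G] [Group H] [Group K]

lemma of_eq_tmul (x : G × G) : (PresentedGroup.of x : TS G) = tmul x.1 x.2 := rfl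

lemma one_tmul (h : G) : tmul (1 : G) h = 1 := by
  simpa using tmul_rel₁ (1 : G) 1 h

lemma tmap_comp (f : H →* K) (f' : G →* H) : tmap (f.comp f') = (tmap f).comp (tmap f') :=
  PresentedGroup.ext fun _ => by simp [of_eq_tmul]

lemma tmap_id : tmap (MonoidHom.id G) = MonoidHom.id (TS G) :=
  PresentedGroup.ext fun _ => by simp [of_eq_tmul]

lemma tmap_one : tmap (1 : G →* H) = 1 :=
  PresentedGroup.ext fun _ => by simp [of_eq_tmul, one_tmul]

lemma kappa_tmap (f : G →* H) (u : TS G) : kappa H (tmap f u) = f (kappa G u) := by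
  have h : (kappa H).comp (tmap f) = f.comp (kappa G) :=
    PresentedGroup.ext fun _ => by simp [of_eq_tmul]
  exact DFunLike.congr_fun h u

lemma tmap_mem_J (f : G →* H) {u : TS G} (hu : u ∈ J G) : tmap f u ∈ J H := by
  rw [J, MonoidHom.mem_ker, kappa_tmap, hu.out, map_one]

lemma smap_mk (f : G →* H) (x : TS G) :
    smap f (QuotientGroup.mk' (delta G) x) = QuotientGroup.mk' (delta H) (tmap f x) := rfl

lemma tmap_mem_delta (f : G →* H) {u : TS G} (hu : u ∈ delta G) : tmap f u ∈ delta H :=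
  (QuotientGroup.eq_one_iff _).mp (delta_le_comap_delta f hu)

lemma delta_le_J : delta G ≤ J G := by
  show delta G ≤ (kappa G).ker
  refine Subgroup.normalClosure_le_normal ?_
  rintro _ ⟨x, y, rfl⟩
  simp only [SetLike.mem_coe, MonoidHom.mem_ker, map_mul, kappa_tmul]
  group

lemma map_smap_Jt_le (f : G →* H) : (Jt G).map (smap f) ≤ Jt H := by
  rintro _ ⟨_, ⟨x, hx, rfl⟩, rfl⟩
  exact ⟨tmap f x, tmap_mem_J f hx, rfl⟩

/-- Expanding `g g' ⊗ h h'` in the two possible orders. -/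
lemma tmul_conj_mul_tmul (g g' h h' : G) :
    tmul (g * h * g' * (g * h)⁻¹) (g * h * h' * (g * h)⁻¹) * tmul g h
      = tmul g h * tmul (h * g * g' * (h * g)⁻¹) (h * g * h' * (h * g)⁻¹) := by
  have expand₁ : tmul (g * g') (h * h') = tmul (g * g' * g⁻¹) (g * h * g⁻¹) *
      (tmul (g * h * g' * (g * h)⁻¹) (g * h * h' * (g * h)⁻¹) *
        (tmul g h * tmul (h * g * h⁻¹) (h * h' * h⁻¹))) := by
    rw [tmul_rel₁ g g' (h * h'), tmul_rel₂ g h h',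
      show g * (h * h') * g⁻¹ = g * h * g⁻¹ * (g * h' * g⁻¹) by group,
      tmul_rel₂ (g * g' * g⁻¹) (g * h * g⁻¹) (g * h' * g⁻¹),
      show g * h * g⁻¹ * (g * g' * g⁻¹) * (g * h * g⁻¹)⁻¹ = g * h * g' * (g * h)⁻¹ by
        group,
      show g * h * g⁻¹ * (g * h' * g⁻¹) * (g * h * g⁻¹)⁻¹ = g * h * h' * (g * h)⁻¹ by
        group]
    simp only [mul_assoc]
  have expand₂ : tmul (g * g') (h * h') = tmul (g * g' * g⁻¹) (g * h * g⁻¹) *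
      (tmul g h * (tmul (h * g * g' * (h * g)⁻¹) (h * g * h' * (h * g)⁻¹) *
        tmul (h * g * h⁻¹) (h * h' * h⁻¹))) := by
    rw [tmul_rel₂ (g * g') h h', tmul_rel₁ g g' h,
      show h * (g * g') * h⁻¹ = h * g * h⁻¹ * (h * g' * h⁻¹) by group,
      tmul_rel₁ (h * g * h⁻¹) (h * g' * h⁻¹) (h * h' * h⁻¹),
      show h * g * h⁻¹ * (h * g' * h⁻¹) * (h * g * h⁻¹)⁻¹ = h * g * g' * (h * g)⁻¹ by
        group,
      show h * g * h⁻¹ * (h * h' * h⁻¹) * (h * g * h⁻¹)⁻¹ = h * g * h' * (h * g)⁻¹ by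
        group]
    simp only [mul_assoc]
  have e := mul_left_cancel (expand₁.symm.trans expand₂)
  simp only [← mul_assoc] at e
  exact mul_right_cancel e

lemma tmul_mul_tmul (g h a b : G) :
    tmul g h * tmul a b =
      tmul (⁅g, h⁆ * a * ⁅g, h⁆⁻¹) (⁅g, h⁆ * b * ⁅g, h⁆⁻¹) * tmul g h := by
  have e := tmul_conj_mul_tmul g ((h * g)⁻¹ * a * (h * g)) h ((h * g)⁻¹ * b * (h * g))
  rw [show h * g * ((h * g)⁻¹ * a * (h * g)) * (h * g)⁻¹ = a by group,
    show h * g * ((h * g)⁻¹ * b * (h * g)) * (h * g)⁻¹ = b by group,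
    show g * h * ((h * g)⁻¹ * a * (h * g)) * (g * h)⁻¹ = ⁅g, h⁆ * a * ⁅g, h⁆⁻¹ by
      rw [commutatorElement_def]; group,
    show g * h * ((h * g)⁻¹ * b * (h * g)) * (g * h)⁻¹ = ⁅g, h⁆ * b * ⁅g, h⁆⁻¹ by
      rw [commutatorElement_def]; group] at e
  exact e.symm

def tmapConj : G →* Monoid.End (TS G) where
  toFun g := tmap (MulAut.conj g).toMonoidHom
  map_one' := by
    show tmap _ = MonoidHom.id (TS G)
    rw [← tmap_id]
    congr 1
    ext
    simp
  map_mul' g h := by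
    show tmap _ = (tmap _).comp (tmap _)
    rw [← tmap_comp]
    congr 1
    ext
    simp [mul_assoc]

lemma conj_eq_tmap (s u : TS G) :
    s * u * s⁻¹ = tmap (MulAut.conj (kappa G s)).toMonoidHom u := by
  have h : (MulDistribMulAction.toMonoidEnd (ConjAct (TS G)) (TS G)).comp
      ConjAct.toConjAct.toMonoidHom = (tmapConj (G := G)).comp (kappa G) := by
    refine MonoidHom.eq_of_eqOn_dense (PresentedGroup.closure_range_of _) ?_
    rintro _ ⟨x, rfl⟩
    refine PresentedGroup.ext (φ := (_ : TS G →* TS G)) fun y => ?_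
    show ConjAct.toConjAct (tmul x.1 x.2) • tmul y.1 y.2
      = tmap (MulAut.conj (kappa G (tmul x.1 x.2))).toMonoidHom (tmul y.1 y.2)
    rw [ConjAct.toConjAct_smul, tmul_mul_tmul, mul_inv_cancel_right, tmap_tmul, kappa_tmul,
      ← commutatorElement_def]
    rfl
  exact congrArg (fun φ : TS G →* Monoid.End (TS G) => φ s u) h

instance range_tmap_subtype_normal (N : Subgroup G) [N.Normal] :
    (tmap N.subtype).range.Normal where
  conj_mem := by
    rintro _ ⟨w, rfl⟩ s
    have hcomm : (MulAut.conj (kappa G s)).toMonoidHom.comp N.subtype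
        = N.subtype.comp (MulAut.conjNormal (kappa G s)).toMonoidHom := by
      ext
      simp
    refine ⟨tmap (MulAut.conjNormal (kappa G s)).toMonoidHom w, ?_⟩
    rw [conj_eq_tmap, ← MonoidHom.comp_apply, ← tmap_comp, ← hcomm, tmap_comp]
    rfl

def kerTmulSet (f : G →* H) : Set (TS G) :=
  {t | ∃ a ∈ f.ker, ∃ g : G, t = tmul a g ∨ t = tmul g a}

lemma ker_tmap_le_normalClosure_of_comp_eq_id (f : G →* H) (σ : H →* G)
    (hσ : f.comp σ = MonoidHom.id H) :
    (tmap f).ker ≤ Subgroup.normalClosure (kerTmulSet f) := by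
  set R := Subgroup.normalClosure (kerTmulSet f)
  have hfσ (g : G) : f (g * (σ (f g))⁻¹) = 1 := by
    rw [map_mul, map_inv, ← MonoidHom.comp_apply f σ, hσ, MonoidHom.id_apply, mul_inv_cancel]
  have hmem (t : TS G) (ht : t ∈ kerTmulSet f) : QuotientGroup.mk' R t = 1 :=
    (QuotientGroup.eq_one_iff t).mpr (Subgroup.subset_normalClosure ht)
  have hleft (g h : G) :
      QuotientGroup.mk' R (tmul (σ (f g)) h) = QuotientGroup.mk' R (tmul g h) := by
    have hrel := tmul_rel₁ (σ (f g)) ((σ (f g))⁻¹ * g) h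
    rw [show σ (f g) * ((σ (f g))⁻¹ * g) = g by group] at hrel
    rw [hrel, map_mul, hmem _ ⟨_, hfσ g, _, Or.inl rfl⟩, one_mul]
  have hright (g h : G) :
      QuotientGroup.mk' R (tmul g (σ (f h))) = QuotientGroup.mk' R (tmul g h) := by
    have hrel := tmul_rel₂ g (σ (f h)) ((σ (f h))⁻¹ * h)
    rw [show σ (f h) * ((σ (f h))⁻¹ * h) = h by group] at hrel
    rw [hrel, map_mul, hmem _ ⟨_, hfσ h, _, Or.inr rfl⟩, mul_one]
  have hfactor : (QuotientGroup.mk' R).comp ((tmap σ).comp (tmap f)) = QuotientGroup.mk' R :=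
    PresentedGroup.ext fun x => by
      simp only [MonoidHom.comp_apply, of_eq_tmul, tmap_tmul]
      rw [hleft, hright]
  intro x hx
  have h := DFunLike.congr_fun hfactor x
  rw [MonoidHom.comp_apply, MonoidHom.comp_apply, hx.out, map_one, map_one] at h
  exact (QuotientGroup.eq_one_iff x).mp h.symm

section Perfect

variable {N : Subgroup G} [N.Normal] {Q : Type*} [Group Q] {φ : TS G →* Q}

lemma map_tmul_mul_mem (hφ : ∀ a ∈ N, ∀ b ∈ N, φ (tmul a b) = 1) {a n : G} (ha : a ∈ N)
    (hn : n ∈ N) (z : G) : φ (tmul a (z * n)) = φ (tmul a z) := by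
  rw [tmul_rel₂, map_mul, hφ _ (Subgroup.Normal.conj_mem ‹_› a ha z) _
    (Subgroup.Normal.conj_mem ‹_› n hn z), mul_one]

lemma map_tmul_conj (hφ : ∀ a ∈ N, ∀ b ∈ N, φ (tmul a b) = 1) {a c : G} (ha : a ∈ N)
    (hc : c ∈ N) (z : G) : φ (tmul a (c * z * c⁻¹)) = φ (tmul a z) := by
  rw [show c * z * c⁻¹ = z * (z⁻¹ * c * z * c⁻¹) by group]
  exact map_tmul_mul_mem hφ ha (mul_mem (Subgroup.Normal.conj_mem' ‹_› c hc z) (inv_mem hc)) z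

lemma map_tmul_mul (hφ : ∀ a ∈ N, ∀ b ∈ N, φ (tmul a b) = 1) {a b : G} (ha : a ∈ N)
    (hb : b ∈ N) (z : G) : φ (tmul (a * b) z) = φ (tmul a z) * φ (tmul b z) := by
  have h := tmul_rel₁ b (b⁻¹ * a * b) z
  rw [show b * (b⁻¹ * a * b) = a * b by group, mul_inv_cancel_right] at h
  rw [h, map_mul, map_tmul_conj hφ ha hb]

lemma map_tmul_eq_one_of_perfect (hφ : ∀ a ∈ N, ∀ b ∈ N, φ (tmul a b) = 1)
    (hperf : commutator N = ⊤) {a : G} (ha : a ∈ N) (z : G) : φ (tmul a z) = 1 := by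
  let q : N →* Q := MonoidHom.mk' (fun n => φ (tmul n z)) fun n m => map_tmul_mul hφ n.2 m.2 z
  suffices q = 1 from DFunLike.congr_fun this ⟨a, ha⟩
  refine MonoidHom.eq_one_of_commutator_eq_top hperf q fun u m v => ?_
  -- `[u, m] ∈ N` acts on `v ⊗ z` by conjugation by `u ⊗ m`, which `φ` kills.
  have hc : ⁅(u : G), (m : G)⁆ ∈ N := (⁅u, m⁆ : N).2
  have hconj := congrArg φ (tmul_mul_tmul (u : G) m v z)
  rw [map_mul, map_mul, hφ _ u.2 _ m.2, one_mul, mul_one,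
    map_tmul_conj hφ (Subgroup.Normal.conj_mem ‹_› _ v.2 _) hc] at hconj
  have hq : q (⁅u, m⁆ * v * ⁅u, m⁆⁻¹) = q v := hconj.symm
  rw [map_mul, map_mul, map_inv] at hq
  exact mul_inv_eq_iff_eq_mul.mp hq

end Perfect

lemma Jt_le_map_smap_Jt_of_comp_eq_id (f : G →* H) (σ : H →* G)
    (hσ : f.comp σ = MonoidHom.id H) : Jt H ≤ (Jt G).map (smap f) := by
  rintro _ ⟨y, hy, rfl⟩
  refine ⟨_, ⟨tmap σ y, tmap_mem_J σ hy, rfl⟩, ?_⟩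
  rw [smap_mk, ← MonoidHom.comp_apply (tmap f), ← tmap_comp, hσ, tmap_id, MonoidHom.id_apply]

lemma exists_mk_eq_of_mem_Jt_inf_ker_smap (f : G →* H) (σ : H →* G)
    (hσ : f.comp σ = MonoidHom.id H) {ξ : SS G} (hξ : ξ ∈ Jt G ⊓ (smap f).ker) :
    ∃ y ∈ J G ⊓ (tmap f).ker, QuotientGroup.mk' (delta G) y = ξ := by
  obtain ⟨⟨x, hx, rfl⟩, hker⟩ := hξ
  have hδ : tmap σ (tmap f x) ∈ delta G :=
    tmap_mem_delta σ ((QuotientGroup.eq_one_iff _).mp hker)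
  have hδ' : QuotientGroup.mk' (delta G) (tmap σ (tmap f x)) = 1 :=
    (QuotientGroup.eq_one_iff _).mpr hδ
  refine ⟨x * (tmap σ (tmap f x))⁻¹,
    Subgroup.mem_inf.mpr ⟨mul_mem hx (inv_mem (delta_le_J hδ)), ?_⟩, ?_⟩
  · rw [MonoidHom.mem_ker, map_mul, map_inv, ← MonoidHom.comp_apply (tmap f), ← tmap_comp, hσ,
      tmap_id, MonoidHom.id_apply, mul_inv_cancel]
  · rw [map_mul, map_inv, hδ', inv_one, mul_one]

lemma smap_mk_smap_subtype (N : Subgroup G) [N.Normal] (ξ : SS N) :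
    smap (QuotientGroup.mk' N) (smap N.subtype ξ) = 1 := by
  obtain ⟨w, rfl⟩ := QuotientGroup.mk'_surjective _ ξ
  have hcomp : (QuotientGroup.mk' N).comp N.subtype = 1 := by
    ext n
    exact (QuotientGroup.eq_one_iff _).mpr n.2
  rw [smap_mk, smap_mk, ← MonoidHom.comp_apply (tmap _) (tmap N.subtype), ← tmap_comp, hcomp,
    tmap_one, MonoidHom.one_apply, map_one]

section Complemented

variable {N : Subgroup G} [N.Normal] {σ : G ⧸ N →* G}

lemma ker_tmap_mk_le_range_sup_delta (hperf : commutator N = ⊤)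
    (hσ : (QuotientGroup.mk' N).comp σ = MonoidHom.id (G ⧸ N)) :
    (tmap (QuotientGroup.mk' N)).ker ≤ (tmap N.subtype).range ⊔ delta G := by
  set R := (tmap N.subtype).range ⊔ delta G
  have hNN : ∀ a ∈ N, ∀ b ∈ N, QuotientGroup.mk' R (tmul a b) = 1 := fun a ha b hb =>
    (QuotientGroup.eq_one_iff _).mpr
      (Subgroup.mem_sup_left ⟨tmul ⟨a, ha⟩ ⟨b, hb⟩, tmap_tmul _ _ _⟩)
  have hleft {a : G} (ha : a ∈ N) (g : G) : tmul a g ∈ R :=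
    (QuotientGroup.eq_one_iff _).mp (map_tmul_eq_one_of_perfect hNN hperf ha g)
  refine (ker_tmap_le_normalClosure_of_comp_eq_id _ σ hσ).trans
    (Subgroup.normalClosure_le_normal ?_)
  rintro _ ⟨a, ha, g, rfl | rfl⟩ <;> rw [QuotientGroup.ker_mk'] at ha
  · exact hleft ha g
  · have hsymm : tmul a g * tmul g a ∈ R :=
      Subgroup.mem_sup_right (Subgroup.subset_normalClosure ⟨a, g, rfl⟩)
    simpa using mul_mem (inv_mem (hleft ha g)) hsymm

lemma mk_mem_map_smap_subtype_Jt (hperf : commutator N = ⊤)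
    (hσ : (QuotientGroup.mk' N).comp σ = MonoidHom.id (G ⧸ N)) {y : TS G}
    (hy : y ∈ J G ⊓ (tmap (QuotientGroup.mk' N)).ker) :
    QuotientGroup.mk' (delta G) y ∈ (Jt N).map (smap N.subtype) := by
  obtain ⟨_, ⟨w, rfl⟩, d, hd, rfl⟩ :=
    Subgroup.mem_sup_of_normal_right.mp (ker_tmap_mk_le_range_sup_delta hperf hσ hy.2)
  have hw : w ∈ J N := by
    have h : kappa G (tmap N.subtype w * d) = 1 := hy.1
    rw [map_mul, (delta_le_J hd).out, mul_one, kappa_tmap] at h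
    exact N.subtype_injective (h.trans (map_one _).symm)
  refine ⟨_, ⟨w, hw, rfl⟩, ?_⟩
  have hd' : QuotientGroup.mk' (delta G) d = 1 := (QuotientGroup.eq_one_iff d).mpr hd
  rw [smap_mk, map_mul, hd', mul_one]

end Complemented

end NATensor

lemma Subgroup.exists_comp_eq_id_of_sup_eq_top_of_inf_eq_bot {G : Type*} [Group G]
    {N B : Subgroup G} [N.Normal] (hB1 : N ⊔ B = ⊤) (hB2 : N ⊓ B = ⊥) :
    ∃ σ : G ⧸ N →* G, (QuotientGroup.mk' N).comp σ = MonoidHom.id _ := by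
  have hc : B.IsComplement' N := by
    refine Subgroup.isComplement'_of_disjoint_and_mul_eq_univ ?_ ?_
    · rw [disjoint_iff, inf_comm, hB2]
    · rw [← Subgroup.mul_normal, sup_comm, hB1, Subgroup.coe_top]
  exact ⟨B.subtype.comp hc.QuotientMulEquiv.toMonoidHom,
    MonoidHom.ext hc.quotientGroupMk_leftQuotientEquiv⟩

open NATensor in
/-- if `N` is a perfect normal subgroup of `G` with a complement, then the
sequence `J̃(N) → J̃(G) → J̃(G/N) → 1` is exact: the map `J̃(G) → J̃(G/N)` (restriction of
the map induced by `G → G/N` on symmetric squares) is surjective and its kernel equals the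
image of `J̃(N)` under the map induced by the inclusion `N → G`.  (Topologically:
`π₂ˢ(K(N,1)) → π₂ˢ(K(G,1)) → π₂ˢ(K(G/N,1)) → 0` is exact.) -/
theorem Jt_exact_of_perfect_normal_complemented (G : Type*) [Group G]
    (N : Subgroup G) [N.Normal] (hperf : commutator ↥N = ⊤)
    (B : Subgroup G) (hB1 : N ⊔ B = ⊤) (hB2 : N ⊓ B = ⊥) :
    Subgroup.map (smap (QuotientGroup.mk' N)) (Jt G) = Jt (G ⧸ N) ∧
    Jt G ⊓ MonoidHom.ker (smap (QuotientGroup.mk' N)) =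
      Subgroup.map (smap N.subtype) (Jt ↥N) := by
  obtain ⟨σ, hσ⟩ := Subgroup.exists_comp_eq_id_of_sup_eq_top_of_inf_eq_bot hB1 hB2
  refine ⟨le_antisymm (map_smap_Jt_le _) (Jt_le_map_smap_Jt_of_comp_eq_id _ σ hσ),
    le_antisymm (fun ξ hξ => ?_) (le_inf (map_smap_Jt_le _) ?_)⟩
  · obtain ⟨y, hy, rfl⟩ := exists_mk_eq_of_mem_Jt_inf_ker_smap _ σ hσ hξ
    exact mk_mem_map_smap_subtype_Jt hperf hσ hy
  · rintro _ ⟨ξ, -, rfl⟩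
    exact smap_mk_smap_subtype N ξ
end

section
/- Let A be a finitely generated abelian group and let N be a normal subgroup of A ⊗ A with N ⊆ ∇(A). Then (A ⊗ A)/N ≅ (∇(A)/N) × (A ∧ A). -/
/-!
For abelian `A` the defining relations of `A ⊗ A` say exactly that `⊗` is biadditive, so `A ⊗ A`
is the ordinary tensor square of `A`; in particular it is abelian. Write `A` as a finite product
of cyclic groups and let `a_i` be the `i`-th component of `a`. Then
`a ∧ b ↦ ∏_{i<j} (a_i ⊗ b_j)(b_i ⊗ a_j)⁻¹` is a homomorphism `A ∧ A → A ⊗ A` splitting the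
projection, because `a_i ∧ b_i = 1` inside a cyclic factor. Composing it with `A ⊗ A → (A ⊗ A)/N`
splits the projection `(A ⊗ A)/N → A ∧ A`, whose kernel is `∇(A)/N`, and a split epimorphism of
abelian groups exhibits its source as the product of kernel and target.
-/

def MonoidHom.equivKerProdOfRightInverse {G Q : Type*} [CommGroup G] [Group Q] (p : G →* Q)
    (s : Q →* G) (hs : Function.RightInverse s p) : G ≃* p.ker × Q where
  toFun g := (⟨g / s (p g), by simp [hs (p g)]⟩, p g)
  invFun x := x.1 * s x.2
  left_inv g := div_mul_cancel g _
  right_inv := by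
    rintro ⟨⟨k, hk⟩, q⟩
    rw [MonoidHom.mem_ker] at hk
    ext <;> simp [hk, hs q]
  map_mul' g g' := by
    ext
    · simp only [map_mul]
      exact mul_div_mul_comm g g' _ _
    · exact map_mul p g g'

theorem Finset.prod_prod_eq_prod_prod_lt_mul {M ι : Type*} [CommMonoid M] [Fintype ι]
    [LinearOrder ι] (d : ι → ι → M) (hd : ∀ i, d i i = 1) :
    ∏ i, ∏ j, d i j = ∏ i, ∏ j with i < j, d i j * d j i := by
  have hsplit : ∀ i j, d i j = (if i < j then d i j else 1) * (if j < i then d i j else 1) := by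
    intro i j
    rcases lt_trichotomy i j with h | rfl | h
    · simp [h, h.not_gt]
    · simp [hd]
    · simp [h, h.not_gt]
  calc ∏ i, ∏ j, d i j = (∏ i, ∏ j with i < j, d i j) * ∏ i, ∏ j with j < i, d i j := by
        simp_rw [Finset.prod_filter, ← Finset.prod_mul_distrib, ← hsplit]
    _ = (∏ i, ∏ j with i < j, d i j) * ∏ i, ∏ j with i < j, d j i := by
        simp_rw [Finset.prod_filter]
        rw [Finset.prod_comm (f := fun i j => if j < i then d i j else 1)]
    _ = ∏ i, ∏ j with i < j, d i j * d j i := by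
        simp_rw [Finset.prod_mul_distrib]

lemma MonoidHom.range_comp_comp_le_zpowers {G H K L : Type*} [Group G] [Group H] [Group K]
    [Group L] {π : H →* K} {g : K} (h : π.range ≤ Subgroup.zpowers g) (φ : K →* L)
    (ψ : G →* H) : (φ.comp (π.comp ψ)).range ≤ Subgroup.zpowers (φ g) := by
  rw [MonoidHom.range_comp, ← MonoidHom.map_zpowers]
  exact Subgroup.map_mono (le_trans (by rintro _ ⟨x, rfl⟩; exact ⟨ψ x, rfl⟩) h)

def HasCyclicDecomposition (A : Type*) [CommGroup A] : Prop :=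
  ∃ (ι : Type) (_ : Fintype ι) (π : ι → A →* A),
    (∀ a, ∏ i, π i a = a) ∧ ∀ i, ∃ g : A, (π i).range ≤ Subgroup.zpowers g

namespace HasCyclicDecomposition

variable {A B : Type*} [CommGroup A] [CommGroup B]

lemma pi {κ : Type} [Fintype κ] [DecidableEq κ] (C : κ → Type*) [∀ k, CommGroup (C k)]
    [∀ k, IsCyclic (C k)] : HasCyclicDecomposition (∀ k, C k) := by
  refine ⟨κ, inferInstance, fun k => (MonoidHom.mulSingle C k).comp
    ((MonoidHom.id _).comp (Pi.evalMonoidHom C k)), fun x => ?_, fun k => ?_⟩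
  · simpa using Finset.univ_prod_mulSingle x
  · obtain ⟨c, hc⟩ := IsCyclic.exists_generator (α := C k)
    exact ⟨_, MonoidHom.range_comp_comp_le_zpowers (fun x _ => hc x) _ _⟩

lemma prod (hA : HasCyclicDecomposition A) (hB : HasCyclicDecomposition B) :
    HasCyclicDecomposition (A × B) := by
  obtain ⟨ι, _, π, hπ, hπc⟩ := hA
  obtain ⟨κ, _, ρ, hρ, hρc⟩ := hB
  refine ⟨ι ⊕ κ, inferInstance,
    Sum.elim (fun i => (MonoidHom.inl A B).comp ((π i).comp (MonoidHom.fst A B)))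
      (fun k => (MonoidHom.inr A B).comp ((ρ k).comp (MonoidHom.snd A B))),
    fun x => ?_, ?_⟩
  · ext <;> simp [Fintype.prod_sum_type, Prod.fst_prod, Prod.snd_prod, hπ, hρ]
  · rintro (i | k)
    · obtain ⟨g, hg⟩ := hπc i
      exact ⟨_, MonoidHom.range_comp_comp_le_zpowers hg _ _⟩
    · obtain ⟨g, hg⟩ := hρc k
      exact ⟨_, MonoidHom.range_comp_comp_le_zpowers hg _ _⟩

lemma of_retraction (hA : HasCyclicDecomposition A) (φ : A →* B) (ψ : B →* A)
    (h : ∀ b, φ (ψ b) = b) : HasCyclicDecomposition B := by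
  obtain ⟨ι, _, π, hπ, hπc⟩ := hA
  refine ⟨ι, inferInstance, fun i => φ.comp ((π i).comp ψ), fun b => ?_, fun i => ?_⟩
  · simp [← map_prod, hπ, h]
  · obtain ⟨g, hg⟩ := hπc i
    exact ⟨_, MonoidHom.range_comp_comp_le_zpowers hg _ _⟩

end HasCyclicDecomposition

lemma hasCyclicDecomposition_of_fg (A : Type*) [CommGroup A] [Group.FG A] :
    HasCyclicDecomposition A := by
  classical
  obtain ⟨ι, κ, _, _, _, -, _, ⟨eqv⟩⟩ := CommGroup.equiv_free_prod_prod_multiplicative_zmod A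
  exact ((HasCyclicDecomposition.pi _).prod (HasCyclicDecomposition.pi _)).of_retraction
    eqv.symm.toMonoidHom eqv.toMonoidHom eqv.symm_apply_apply

namespace NATensor

variable {A : Type*} [CommGroup A]

lemma tmul_mul_left_rev (g g' h : A) : tmul (g * g') h = tmul g' h * tmul g h := by
  simpa using tmul_rel₁ g g' h

lemma tmul_mul_right (g h h' : A) : tmul g (h * h') = tmul g h * tmul g h' := by
  simpa using tmul_rel₂ g h h'

/-- Expand `(g g') ⊗ (h h')` in the two possible orders and cancel. -/
lemma commute_tmul_tmul (g h g' h' : A) : Commute (tmul g h) (tmul g' h') := by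
  have key : tmul g' h * (tmul g h * tmul g' h') * tmul g h' =
      tmul g' h * (tmul g' h' * tmul g h) * tmul g h' :=
    calc _ = tmul (g * g') h * tmul (g * g') h' := by
          simp only [tmul_mul_left_rev, mul_assoc]
      _ = tmul g' (h * h') * tmul g (h * h') := by
          rw [← tmul_mul_right, ← tmul_mul_left_rev]
      _ = _ := by simp only [tmul_mul_right, mul_assoc]
  exact mul_left_cancel (mul_right_cancel key)

abbrev TS.commGroup : CommGroup (TS A) :=
  { (inferInstance : Group (TS A)) with
    mul_comm := fun x y => by
      have hgen := Subgroup.closure_le_centralizer_centralizer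
        (Set.range (PresentedGroup.of (rels := rels A)))
      rw [PresentedGroup.closure_range_of] at hgen
      refine Set.centralizer_centralizer_comm_of_comm ?_ x (hgen trivial) y (hgen trivial)
      rintro _ ⟨⟨g, h⟩, rfl⟩ _ ⟨⟨g', h'⟩, rfl⟩
      exact commute_tmul_tmul g h g' h' }

attribute [local instance] TS.commGroup

lemma tmul_mul_left (g g' h : A) : tmul (g * g') h = tmul g h * tmul g' h := by
  rw [tmul_mul_left_rev, mul_comm]

def tmulHom : A →* A →* TS A :=
  MonoidHom.mk' (fun g => MonoidHom.mk' (tmul g) (tmul_mul_right g))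
    fun g g' => MonoidHom.ext (tmul_mul_left g g')

@[simp] lemma tmulHom_apply (g h : A) : tmulHom g h = tmul g h := rfl

def emulHom : A →* A →* ES A := tmulHom.compr₂ (QuotientGroup.mk' (nabla A))

@[simp] lemma emulHom_apply (g h : A) : emulHom g h = emul g h := rfl

@[simp] lemma mk_tmul (g h : A) : ((tmul g h : TS A) : ES A) = emul g h := rfl

lemma emul_self (g : A) : emul g g = 1 :=
  (QuotientGroup.eq_one_iff _).mpr (Subgroup.subset_normalClosure ⟨g, rfl⟩)

lemma inv_emul (g h : A) : (emul g h)⁻¹ = emul h g := by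
  have h1 := emul_self (g * h)
  simp only [← emulHom_apply, map_mul, MonoidHom.mul_apply] at h1
  simp only [emulHom_apply, emul_self, one_mul, mul_one] at h1
  exact (eq_inv_of_mul_eq_one_left h1).symm

lemma emul_eq_one_of_mem_zpowers {g a b : A} (ha : a ∈ Subgroup.zpowers g)
    (hb : b ∈ Subgroup.zpowers g) : emul a b = 1 := by
  obtain ⟨m, rfl⟩ := Subgroup.mem_zpowers_iff.mp ha
  obtain ⟨n, rfl⟩ := Subgroup.mem_zpowers_iff.mp hb
  rw [← emulHom_apply, map_zpow, map_zpow, MonoidHom.zpow_apply, emulHom_apply, emul_self,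
    one_zpow, one_zpow]

def TS.lift {T : Type*} [CommGroup T] (β : A →* A →* T) : TS A →* T :=
  PresentedGroup.toGroup (f := fun x => β x.1 x.2) (by
    rintro r (⟨g, g', h, rfl⟩ | ⟨g, h, h', rfl⟩) <;>
      simp only [map_mul, map_inv, FreeGroup.lift_apply_of, MonoidHom.mul_apply,
        mul_inv_cancel_comm, mul_inv_eq_one]
    exact mul_comm _ _)

@[simp] lemma TS.lift_tmul {T : Type*} [CommGroup T] (β : A →* A →* T) (g h : A) :
    TS.lift β (tmul g h) = β g h :=
  PresentedGroup.toGroup.of _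

section AlternatingForm

variable {ι : Type*} [Fintype ι] [LinearOrder ι] (π : ι → A →* A)

def alternatingForm : A →* A →* TS A :=
  ∏ i, ∏ j with i < j,
    (tmulHom.comp (π i)).compl₂ (π j) / ((tmulHom.comp (π i)).compl₂ (π j)).flip

lemma alternatingForm_apply (a b : A) :
    alternatingForm π a b =
      ∏ i, ∏ j with i < j, tmul (π i a) (π j b) / tmul (π i b) (π j a) := by
  simp [alternatingForm, MonoidHom.finsetProd_apply]

lemma alternatingForm_self (a : A) : alternatingForm π a a = 1 := by
  simp [alternatingForm_apply]

lemma mk_alternatingForm (hπ : ∀ a, ∏ i, π i a = a)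
    (hcyc : ∀ i, ∃ g : A, (π i).range ≤ Subgroup.zpowers g) (a b : A) :
    QuotientGroup.mk' (nabla A) (alternatingForm π a b) = emul a b := by
  have hdiag (i : ι) : emul (π i a) (π i b) = 1 := by
    obtain ⟨g, hg⟩ := hcyc i
    exact emul_eq_one_of_mem_zpowers (hg ⟨a, rfl⟩) (hg ⟨b, rfl⟩)
  calc QuotientGroup.mk' (nabla A) (alternatingForm π a b)
      = ∏ i, ∏ j with i < j, emul (π i a) (π j b) * emul (π j a) (π i b) := by
        simp [alternatingForm_apply, div_eq_mul_inv, inv_emul]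
    _ = ∏ i, ∏ j, emul (π i a) (π j b) :=
        (Finset.prod_prod_eq_prod_prod_lt_mul _ hdiag).symm
    _ = emul (∏ i, π i a) (∏ j, π j b) := by
        simp only [← emulHom_apply, map_prod, MonoidHom.finsetProd_apply]
        exact Finset.prod_comm
    _ = emul a b := by rw [hπ, hπ]

lemma nabla_le_ker_lift_alternatingForm : nabla A ≤ (TS.lift (alternatingForm π)).ker := by
  refine Subgroup.normalClosure_le_normal ?_
  rintro _ ⟨x, rfl⟩
  simp [alternatingForm_self]

end AlternatingForm

theorem HasCyclicDecomposition.exists_splitting (h : HasCyclicDecomposition A) :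
    ∃ s : ES A →* TS A, Function.RightInverse s (QuotientGroup.mk' (nabla A)) := by
  obtain ⟨ι, _, π, hπ, hcyc⟩ := h
  let _ : LinearOrder ι := LinearOrder.lift' _ (Fintype.equivFin ι).injective
  have hsplit : (QuotientGroup.mk' (nabla A)).comp (TS.lift (alternatingForm π)) =
      QuotientGroup.mk' (nabla A) :=
    PresentedGroup.ext fun x => by
      show QuotientGroup.mk' _ (TS.lift _ (tmul x.1 x.2)) = emul x.1 x.2
      rw [TS.lift_tmul]
      exact mk_alternatingForm π hπ hcyc x.1 x.2
  refine ⟨QuotientGroup.lift _ _ (nabla_le_ker_lift_alternatingForm π), fun w => ?_⟩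
  induction w using QuotientGroup.induction_on with
  | H t => exact DFunLike.congr_fun hsplit t

end NATensor

open NATensor in
/-- for a finitely generated abelian group `A` and a normal subgroup `N` of
`A ⊗ A` with `N ⊆ ∇(A)`, one has `(A ⊗ A)/N ≅ (∇(A)/N) × (A ∧ A)`
(here `∇(A)/N` is realized as the image of `∇(A)` in `(A ⊗ A)/N`). -/
theorem tensor_square_quotient_of_fg_abelian (A : Type*) [CommGroup A] [Group.FG A]
    (N : Subgroup (TS A)) [N.Normal] (hN : N ≤ nabla A) :
    Nonempty ((TS A ⧸ N) ≃*
      ↥(Subgroup.map (QuotientGroup.mk' N) (nabla A)) × ES A) := by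
  have hker : (QuotientGroup.map N (nabla A) (MonoidHom.id _) hN).ker =
      Subgroup.map (QuotientGroup.mk' N) (nabla A) :=
    (QuotientGroup.ker_map _ _ _ _).trans (congrArg _ (Subgroup.comap_id _))
  let _ : CommGroup (TS A) := TS.commGroup
  obtain ⟨s, hs⟩ := (hasCyclicDecomposition_of_fg A).exists_splitting
  refine ⟨MulEquiv.trans ?_ (MulEquiv.prodCongr (MulEquiv.subgroupCongr hker) (MulEquiv.refl _))⟩
  exact MonoidHom.equivKerProdOfRightInverse _ ((QuotientGroup.mk' N).comp s) hs
end
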